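/- Let G be a finite simple graph and let L be a list-assignment for G with |L(v)| = 3 for every vertex v. Let u be a vertex whose neighborhood is exactly {u_1, u_2, u_3, u_4}, where u_1u_2, u_2u_3, u_3u_4 and u_4u_1 are edges of G, and suppose that deg(u_1) ≤ 6, deg(u_2) ≤ 7 and deg(u_3) ≤ 6 (degrees taken in G). Then every arboreal L-coloring of G − {u, u_1, u_2, u_3} can be extended to an arboreal L-coloring of G in at least two distinct ways. -/

import Mathlib

/-- `ArbColOn G s f` : the coloring `f` is arboreal on the vertex set `s`,
i.e. for every color `c`, the subgraph of `G` induced on the vertices of `s`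
colored `c` is acyclic (a forest). -/
def ArbColOn {V : Type*} {α : Type*} (G : SimpleGraph V) (s : Set V) (f : V → α) : Prop :=
  ∀ c : α, (G.induce {v | v ∈ s ∧ f v = c}).IsAcyclic

/-!
Color `u₃, u₂, u₁, u` in this order. A vertex may receive a color carried by at most one of its
already colored neighbors: a monochromatic cycle through it would need two. The degree bounds
leave at most `4, 5, 5, 4` colored neighbors, so with three colors such a color always exists,
and two of them at any step give two extensions. Otherwise the outside neighbors of `u₃` carry the
two other colors twice each, so `u₁u₃` is not an edge and no outside neighbor of `u₃` has its
color; and `u₁, u₂, u₃, u₄` carry two colors twice each. Since `u₃` and `u₄` differ, either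
`u₁, u₃` share a color `m` and `u₂, u₄` the other one, and recoloring `u` with `m` makes `u₃` a
leaf of the `m`-forest; or `u₂, u₃` share `m`, and by the same count at `u₁` recoloring `u₁` with
`m` hangs the path `u₁ u₂ u₃` onto the `m`-forest by at most one edge.
-/

section Arboreal

open SimpleGraph Set Function

variable {V α : Type*} {G : SimpleGraph V}

theorem SimpleGraph.isAcyclic_induce_iff {s : Set V} :
    (G.induce s).IsAcyclic ↔
      ∀ ⦃v : V⦄ (p : G.Walk v v), p.IsCycle → ¬ ∀ x ∈ p.support, x ∈ s := by
  have hinj : Injective (Embedding.induce (G := G) s).toHom :=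
    (Embedding.induce (G := G) s).injective
  constructor
  · intro h v p hp hs
    refine h (p.induce s hs) ?_
    rwa [← Walk.isCycle_map_iff_of_injective hinj, Walk.map_induce]
  · intro h v p hp
    refine h (p.map (Embedding.induce s).toHom) ((Walk.isCycle_map_iff_of_injective hinj).2 hp) ?_
    intro x hx
    rw [Walk.support_map, List.mem_map] at hx
    obtain ⟨y, -, rfl⟩ := hx
    exact y.2

theorem arbColOn_iff {s : Set V} {g : V → α} :
    ArbColOn G s g ↔ ∀ ⦃v : V⦄ (p : G.Walk v v), p.IsCycle →
      ¬ ∀ x ∈ p.support, x ∈ s ∧ g x = g v := by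
  simp only [ArbColOn, isAcyclic_induce_iff]
  refine ⟨fun h v p hp hs => h (g v) p hp hs, fun h c v p hp hs => h p hp fun x hx => ?_⟩
  exact ⟨(hs x hx).1, (hs x hx).2.trans (hs v p.start_mem_support).2.symm⟩

theorem ArbColOn.mono {s t : Set V} {g : V → α} (h : ArbColOn G s g) (hts : t ⊆ s) :
    ArbColOn G t g := by
  rw [arbColOn_iff] at h ⊢
  exact fun v p hp hs => h p hp fun x hx => ⟨hts (hs x hx).1, (hs x hx).2⟩

theorem ArbColOn.congr {s : Set V} {g g' : V → α} (h : ArbColOn G s g) (hgg' : EqOn g g' s) :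
    ArbColOn G s g' := by
  rw [arbColOn_iff] at h ⊢
  refine fun v p hp hs => h p hp fun x hx => ⟨(hs x hx).1, ?_⟩
  rw [hgg' (hs x hx).1, hgg' (hs v p.start_mem_support).1]
  exact (hs x hx).2

def nbrsOfColor (G : SimpleGraph V) (s : Set V) (g : V → α) (v : V) (c : α) : Set V :=
  {w | w ∈ s ∧ G.Adj v w ∧ g w = c}

theorem nbrsOfColor_congr {s : Set V} {g g' : V → α} {v : V} {c : α} (h : EqOn g g' s) :
    nbrsOfColor G s g v c = nbrsOfColor G s g' v c := by
  ext w
  exact and_congr_right fun hw => by rw [h hw]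

theorem ArbColOn.insert_of_subsingleton {s : Set V} {g : V → α} {v : V} (h : ArbColOn G s g)
    (hv : (nbrsOfColor G s g v (g v)).Subsingleton) : ArbColOn G (insert v s) g := by
  classical
  rw [arbColOn_iff] at h ⊢
  intro a p hp hs
  by_cases hvp : v ∈ p.support
  · -- the two neighbors of `v` on the cycle are distinct and colored `g v`
    have hq := hp.rotate hvp
    have hnil : ¬ (p.rotate v hvp).Nil := hq.not_nil
    have hmem : ∀ x ∈ (p.rotate v hvp).support, G.Adj v x → x ∈ nbrsOfColor G s g v (g v) := by
      intro x hx hvx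
      rw [Walk.mem_support_rotate_iff] at hx
      obtain ⟨hxs, hxa⟩ := hs x hx
      exact ⟨hxs.resolve_left hvx.ne', hvx, hxa.trans (hs v hvp).2.symm⟩
    exact hq.snd_ne_penultimate (hv (hmem _ (Walk.getVert_mem_support _ _) (Walk.adj_snd hnil))
      (hmem _ (Walk.getVert_mem_support _ _) (Walk.adj_penultimate hnil).symm))
  · exact h p hp fun x hx =>
      ⟨(hs x hx).1.resolve_left (ne_of_mem_of_not_mem hx hvp), (hs x hx).2⟩

theorem ArbColOn.insert_of_forall {s : Set V} {g : V → α} {v p : V} (h : ArbColOn G s g)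
    (hv : ∀ w ∈ s, G.Adj v w → g w = g v → w = p) : ArbColOn G (insert v s) g :=
  h.insert_of_subsingleton
    ((subsingleton_singleton (a := p)).anti fun w hw => hv w hw.1 hw.2.1 hw.2.2)

theorem Set.insert_compl_insert {a : V} {s : Set V} (ha : a ∉ s) :
    insert a (insert a s)ᶜ = sᶜ := by
  ext x
  by_cases hx : x = a <;> simp_all

theorem eqOn_update_of_notMem [DecidableEq V] {s : Set V} {g : V → α} {v : V} {c : α}
    (hvs : v ∉ s) : EqOn (update g v c) g s :=
  fun _ hx => update_of_ne (ne_of_mem_of_not_mem hx hvs) _ _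

section Counting

variable [Finite V] {s : Set V} {g : V → α} {v : V} {L : Finset α} {c e : α}

theorem sum_ncard_nbrsOfColor_le (T : Finset α) :
    ∑ e ∈ T, (nbrsOfColor G s g v e).ncard ≤ (G.neighborSet v ∩ s).ncard := by
  classical
  suffices h : ∑ e ∈ T, (nbrsOfColor G s g v e).ncard = (G.neighborSet v ∩ s ∩ g ⁻¹' T).ncard from
    h ▸ ncard_le_ncard inter_subset_left
  induction T using Finset.induction_on with
  | empty => simp
  | insert a T ha ih =>
    rw [Finset.sum_insert ha, ih, ← ncard_union_eq]
    · congr 1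
      ext w
      simp only [nbrsOfColor, Finset.coe_insert, mem_union, mem_ofPred_eq, mem_inter_iff,
        mem_preimage, mem_insert_iff, SimpleGraph.mem_neighborSet, Finset.mem_coe]
      tauto
    · refine disjoint_left.2 fun w hw hw' => ha ?_
      rw [← hw.2.2]
      exact hw'.2

theorem exists_ncard_nbrsOfColor_le_one (hdeg : (G.neighborSet v ∩ s).ncard < 2 * L.card) :
    ∃ c ∈ L, (nbrsOfColor G s g v c).ncard ≤ 1 := by
  by_contra! h
  have := L.card_nsmul_le_sum _ 2 fun e he => h e he
  have := sum_ncard_nbrsOfColor_le (G := G) (s := s) (g := g) (v := v) L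
  simp only [smul_eq_mul] at *
  omega

theorem exists_two_safe_or_forced (hdeg : (G.neighborSet v ∩ s).ncard < 2 * L.card) :
    (∃ c ∈ L, ∃ c' ∈ L, c ≠ c' ∧ (nbrsOfColor G s g v c).ncard ≤ 1 ∧
      (nbrsOfColor G s g v c').ncard ≤ 1) ∨
    ∃ c ∈ L, (nbrsOfColor G s g v c).ncard ≤ 1 ∧
      ∀ e ∈ L, e ≠ c → 2 ≤ (nbrsOfColor G s g v e).ncard := by
  obtain ⟨c, hc, hsafe⟩ := exists_ncard_nbrsOfColor_le_one hdeg
  by_cases h : ∃ e ∈ L, e ≠ c ∧ (nbrsOfColor G s g v e).ncard ≤ 1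
  · obtain ⟨e, he, hec, hsafe'⟩ := h
    exact .inl ⟨c, hc, e, he, hec.symm, hsafe, hsafe'⟩
  · push Not at h
    exact .inr ⟨c, hc, hsafe, fun e he hec => h e he hec⟩

theorem ncard_nbrsOfColor_add_add_two_le (hL : L.card = 3) (hc : c ∈ L)
    (hforced : ∀ e ∈ L, e ≠ c → 2 ≤ (nbrsOfColor G s g v e).ncard) (he : e ∈ L) (hec : e ≠ c) :
    (nbrsOfColor G s g v e).ncard + (nbrsOfColor G s g v c).ncard + 2 ≤
      (G.neighborSet v ∩ s).ncard := by
  classical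
  have he' : e ∈ L.erase c := Finset.mem_erase.2 ⟨hec, he⟩
  have hcard : ((L.erase c).erase e).card = 1 := by
    rw [Finset.card_erase_of_mem he', Finset.card_erase_of_mem hc, hL]
  have hrest := ((L.erase c).erase e).card_nsmul_le_sum (fun e => (nbrsOfColor G s g v e).ncard) 2
    fun x hx => hforced x (Finset.mem_of_mem_erase (Finset.mem_of_mem_erase hx))
      (Finset.ne_of_mem_erase (Finset.mem_of_mem_erase hx))
  have := sum_ncard_nbrsOfColor_le (G := G) (s := s) (g := g) (v := v) L
  rw [← Finset.add_sum_erase _ _ hc, ← Finset.add_sum_erase _ _ he'] at this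
  rw [hcard, smul_eq_mul] at hrest
  omega

theorem ncard_nbrsOfColor_add_add_four_le (hL : L.card = 3) (hc : c ∈ L)
    (hforced : ∀ e ∈ L, e ≠ c → 2 ≤ (nbrsOfColor G s g v e).ncard) (he : e ∉ L) :
    (nbrsOfColor G s g v e).ncard + (nbrsOfColor G s g v c).ncard + 4 ≤
      (G.neighborSet v ∩ s).ncard := by
  classical
  have hrest := (L.erase c).card_nsmul_le_sum (fun e => (nbrsOfColor G s g v e).ncard) 2
    fun x hx => hforced x (Finset.mem_of_mem_erase hx) (Finset.ne_of_mem_erase hx)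
  have := sum_ncard_nbrsOfColor_le (G := G) (s := s) (g := g) (v := v) (insert e L)
  rw [Finset.sum_insert he, ← Finset.add_sum_erase _ _ hc] at this
  rw [Finset.card_erase_of_mem hc, hL, smul_eq_mul] at hrest
  omega

theorem ncard_nbrsOfColor_add_four_le (hL : L.card = 3) (hc : c ∈ L)
    (hforced : ∀ e ∈ L, e ≠ c → 2 ≤ (nbrsOfColor G s g v e).ncard) :
    (nbrsOfColor G s g v c).ncard + 4 ≤ (G.neighborSet v ∩ s).ncard := by
  classical
  obtain ⟨e, he⟩ : (L.erase c).Nonempty := by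
    rw [← Finset.card_pos, Finset.card_erase_of_mem hc, hL]
    norm_num
  have := ncard_nbrsOfColor_add_add_two_le hL hc hforced (Finset.mem_of_mem_erase he)
    (Finset.ne_of_mem_erase he)
  have := hforced e (Finset.mem_of_mem_erase he) (Finset.ne_of_mem_erase he)
  omega

theorem mem_and_ne_of_forced (hdeg : (G.neighborSet v ∩ s).ncard ≤ 4) (hL : L.card = 3)
    (hc : c ∈ L) (hforced : ∀ e ∈ L, e ≠ c → 2 ≤ (nbrsOfColor G s g v e).ncard) {w : V}
    (hw : w ∈ s) (hvw : G.Adj v w) : g w ∈ L ∧ g w ≠ c := by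
  have hpos : 0 < (nbrsOfColor G s g v (g w)).ncard :=
    (ncard_pos (toFinite _)).2 ⟨w, hw, hvw, rfl⟩
  refine ⟨by_contra fun he => ?_, fun hwc => ?_⟩
  · have := ncard_nbrsOfColor_add_add_four_le hL hc hforced he
    omega
  · have := ncard_nbrsOfColor_add_four_le hL hc hforced
    rw [← hwc] at this
    omega

theorem ncard_nbrsOfColor_le_two_of_forced (hdeg : (G.neighborSet v ∩ s).ncard ≤ 4)
    (hL : L.card = 3) (hc : c ∈ L)
    (hforced : ∀ e ∈ L, e ≠ c → 2 ≤ (nbrsOfColor G s g v e).ncard) (e : α) :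
    (nbrsOfColor G s g v e).ncard ≤ 2 := by
  by_cases hec : e = c
  · have := ncard_nbrsOfColor_add_four_le hL hc hforced
    rw [hec]
    omega
  by_cases he : e ∈ L
  · have := ncard_nbrsOfColor_add_add_two_le hL hc hforced he hec
    omega
  · have := ncard_nbrsOfColor_add_add_four_le hL hc hforced he
    omega

theorem ncard_neighborSet_inter_compl_add_le {A S : Set V} (hA : A ⊆ G.neighborSet v)
    (hAS : A ⊆ S) : (G.neighborSet v ∩ Sᶜ).ncard + A.ncard ≤ (G.neighborSet v).ncard := by
  rw [← ncard_union_eq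
    (disjoint_of_subset_right hAS (disjoint_compl_left.mono_left inter_subset_right))]
  exact ncard_le_ncard (union_subset inter_subset_left hA)

end Counting

theorem Finset.eq_of_ne_of_ne_of_card_le_two {s : Finset α} (hs : s.card ≤ 2) {x y t : α}
    (hx : x ∈ s) (hy : y ∈ s) (ht : t ∈ s) (hxt : x ≠ t) (hyt : y ≠ t) : x = y := by
  by_contra hxy
  have := Finset.two_lt_card_iff.2 ⟨x, y, t, hx, hy, ht, hxy, hxt, hyt⟩
  omega

section Extension

variable {L : V → Finset α} {S s : Set V} {f g : V → α} {v : V} {c : α}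

def IsArbLColoringOn (G : SimpleGraph V) (L : V → Finset α) (s : Set V) (g : V → α) : Prop :=
  (∀ x ∈ s, g x ∈ L x) ∧ ArbColOn G s g

theorem IsArbLColoringOn.update_insert [Finite V] [DecidableEq V] (h : IsArbLColoringOn G L s g)
    (hvs : v ∉ s) (hc : c ∈ L v) (hsafe : (nbrsOfColor G s g v c).ncard ≤ 1) :
    IsArbLColoringOn G L (insert v s) (update g v c) := by
  have hg : EqOn g (update g v c) s := (eqOn_update_of_notMem hvs).symm
  refine ⟨?_, (h.2.congr hg).insert_of_subsingleton ?_⟩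
  · rintro x (rfl | hx)
    · simpa using hc
    · rw [← hg hx]
      exact h.1 x hx
  · rwa [update_self, ← nbrsOfColor_congr hg, ← ncard_le_one_iff_subsingleton]

def IsArbExtension (G : SimpleGraph V) (L : V → Finset α) (S : Set V) (f g : V → α) : Prop :=
  (∀ x, g x ∈ L x) ∧ ArbColOn G Set.univ g ∧ ∀ x, x ∉ S → g x = f x

def HasTwoArbExtensions (G : SimpleGraph V) (L : V → Finset α) (S : Set V) (f : V → α) : Prop :=
  ∃ g₁ g₂, IsArbExtension G L S f g₁ ∧ IsArbExtension G L S f g₂ ∧ g₁ ≠ g₂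

def Completable (G : SimpleGraph V) (L : V → Finset α) (S : Set V) (f : V → α) (s : Set V) :
    Prop :=
  ∀ g, IsArbLColoringOn G L s g → EqOn g f Sᶜ → ∃ g', IsArbExtension G L S f g' ∧ EqOn g' g s

theorem completable_univ : Completable G L S f univ :=
  fun g hg hgf => ⟨g, ⟨fun x => hg.1 x trivial, hg.2, fun _ hx => hgf hx⟩, fun _ _ => rfl⟩

theorem Completable.of_insert [Finite V] [DecidableEq V] {t : Set V} (h : Completable G L S f t)
    (ht : insert v s = t) (hvs : v ∉ s) (hvS : v ∈ S)
    (hdeg : (G.neighborSet v ∩ s).ncard < 2 * (L v).card) : Completable G L S f s := by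
  subst ht
  intro g hg hgf
  obtain ⟨c, hc, hsafe⟩ := exists_ncard_nbrsOfColor_le_one (g := g) hdeg
  obtain ⟨g', hg', hg'g⟩ := h _ (hg.update_insert hvs hc hsafe)
    ((eqOn_update_of_notMem (not_not.2 hvS)).trans hgf)
  exact ⟨g', hg', fun x hx => (hg'g (mem_insert_of_mem _ hx)).trans (eqOn_update_of_notMem hvs hx)⟩

theorem Completable.exists_two [Finite V] [DecidableEq V] {t : Set V} (h : Completable G L S f t)
    (ht : insert v s = t) (hg : IsArbLColoringOn G L s g) (hgf : EqOn g f Sᶜ) (hvs : v ∉ s)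
    (hvS : v ∈ S) {c c' : α} (hc : c ∈ L v) (hc' : c' ∈ L v) (hne : c ≠ c')
    (hsafe : (nbrsOfColor G s g v c).ncard ≤ 1) (hsafe' : (nbrsOfColor G s g v c').ncard ≤ 1) :
    HasTwoArbExtensions G L S f := by
  subst ht
  have hupdate : ∀ c, EqOn (update g v c) f Sᶜ := fun _ =>
    (eqOn_update_of_notMem (not_not.2 hvS)).trans hgf
  obtain ⟨g₁, hg₁, hg₁v⟩ := h _ (hg.update_insert hvs hc hsafe) (hupdate c)
  obtain ⟨g₂, hg₂, hg₂v⟩ := h _ (hg.update_insert hvs hc' hsafe') (hupdate c')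
  refine ⟨g₁, g₂, hg₁, hg₂, fun h₁₂ => hne ?_⟩
  simpa using (hg₁v (mem_insert v s)).symm.trans ((congrFun h₁₂ v).trans (hg₂v (mem_insert v s)))

end Extension

section Recolor

variable [DecidableEq V] {g : V → α} {v x y z : V} {m : α}

theorem arbColOn_update_of_pendant (hg : ArbColOn G univ g) (hvy : v ≠ y)
    (hv : ∀ w, w ≠ y → G.Adj v w → g w = m → w = x) (hgy : g y = m)
    (hy : ∀ w, w ≠ v → G.Adj y w → g w ≠ m) : ArbColOn G univ (update g v m) := by
  set g' := update g v m
  have hg' : ∀ w, w ≠ v → g' w = g w := fun w hw => update_of_ne hw _ _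
  have hg'v : g' v = m := update_self _ _ _
  have h₀ : ArbColOn G ({v, y} : Set V)ᶜ g' :=
    (hg.mono (subset_univ _)).congr fun w hw => (hg' w fun h => hw (.inl h)).symm
  have h₁ : ArbColOn G ({y} : Set V)ᶜ g' := by
    rw [← insert_compl_insert (a := v) (s := {y}) (by simpa using hvy)]
    refine h₀.insert_of_forall (p := x) fun w hw hvw hwm => ?_
    have hwv : w ≠ v := fun h => hw (.inl h)
    rw [hg'v, hg' w hwv] at hwm
    exact hv w (fun h => hw (.inr h)) hvw hwm
  rw [← union_compl_self {y}, ← insert_eq]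
  refine h₁.insert_of_forall (p := v) fun w _ hyw hwm => ?_
  rw [hg' y hvy.symm, hgy] at hwm
  by_contra hwv
  exact hy w hwv hyw (hg' w hwv ▸ hwm)

theorem arbColOn_update_of_pendant_path (hg : ArbColOn G univ g) (hvy : v ≠ y) (hvz : v ≠ z)
    (hyz : y ≠ z) (hv : {w | w ≠ y ∧ G.Adj v w ∧ g w = m}.Subsingleton) (hgy : g y = m)
    (hy : ∀ w, w ≠ v → w ≠ z → G.Adj y w → g w ≠ m) (hgz : g z = m)
    (hz : ∀ w, w ≠ y → G.Adj z w → w ≠ v ∧ g w ≠ m) : ArbColOn G univ (update g v m) := by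
  set g' := update g v m
  have hg' : ∀ w, w ≠ v → g' w = g w := fun w hw => update_of_ne hw _ _
  have hg'v : g' v = m := update_self _ _ _
  have h₀ : ArbColOn G ({v, y, z} : Set V)ᶜ g' :=
    (hg.mono (subset_univ _)).congr fun w hw => (hg' w fun h => hw (.inl h)).symm
  have h₁ : ArbColOn G ({y, z} : Set V)ᶜ g' := by
    rw [← insert_compl_insert (a := v) (s := {y, z}) (by simp [hvy, hvz])]
    refine h₀.insert_of_subsingleton (hv.anti ?_)
    rintro w ⟨hw, hvw, hwm⟩
    have hwv : w ≠ v := fun h => hw (.inl h)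
    rw [hg'v, hg' w hwv] at hwm
    exact ⟨fun h => hw (.inr (.inl h)), hvw, hwm⟩
  have h₂ : ArbColOn G ({z} : Set V)ᶜ g' := by
    rw [← insert_compl_insert (a := y) (s := {z}) (by simpa using hyz)]
    refine h₁.insert_of_forall (p := v) fun w hw hyw hwm => ?_
    rw [hg' y hvy.symm, hgy] at hwm
    by_contra hwv
    exact hy w hwv (fun h => hw (.inr h)) hyw (hg' w hwv ▸ hwm)
  rw [← union_compl_self {z}, ← insert_eq]
  refine h₂.insert_of_forall (p := y) fun w _ hzw hwm => ?_
  rw [hg' z hvz.symm, hgz] at hwm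
  by_contra hwy
  obtain ⟨hwv, hwm'⟩ := hz w hwy hzw
  exact hwm' (hg' w hwv ▸ hwm)

end Recolor

structure FourVertexConfig (G : SimpleGraph V) (u u₁ u₂ u₃ u₄ : V) : Prop where
  pairwise_ne : [u₁, u₂, u₃, u₄].Pairwise (· ≠ ·)
  neighborSet_eq : G.neighborSet u = {u₁, u₂, u₃, u₄}
  adj₁₂ : G.Adj u₁ u₂
  adj₂₃ : G.Adj u₂ u₃
  adj₃₄ : G.Adj u₃ u₄
  adj₄₁ : G.Adj u₄ u₁
  ncard_neighborSet₁ : (G.neighborSet u₁).ncard ≤ 6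
  ncard_neighborSet₂ : (G.neighborSet u₂).ncard ≤ 7
  ncard_neighborSet₃ : (G.neighborSet u₃).ncard ≤ 6

namespace FourVertexConfig

variable {u u₁ u₂ u₃ u₄ : V} {L : V → Finset α} {f g : V → α}

theorem adj (hC : FourVertexConfig G u u₁ u₂ u₃ u₄) :
    G.Adj u u₁ ∧ G.Adj u u₂ ∧ G.Adj u u₃ ∧ G.Adj u u₄ := by
  simp only [← SimpleGraph.mem_neighborSet, hC.neighborSet_eq]
  simp

theorem eq_of_adj (hC : FourVertexConfig G u u₁ u₂ u₃ u₄) {w : V} (h : G.Adj u w) :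
    w = u₁ ∨ w = u₂ ∨ w = u₃ ∨ w = u₄ := by
  simpa [hC.neighborSet_eq] using (show w ∈ G.neighborSet u from h)

theorem ne (hC : FourVertexConfig G u u₁ u₂ u₃ u₄) :
    u ≠ u₁ ∧ u ≠ u₂ ∧ u ≠ u₃ ∧ u ≠ u₄ ∧
      u₁ ≠ u₂ ∧ u₁ ≠ u₃ ∧ u₁ ≠ u₄ ∧ u₂ ≠ u₃ ∧ u₂ ≠ u₄ ∧ u₃ ≠ u₄ := by
  obtain ⟨a₁, a₂, a₃, a₄⟩ := hC.adj
  have := hC.pairwise_ne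
  simp only [List.pairwise_cons, List.mem_cons, List.not_mem_nil] at this
  exact ⟨a₁.ne, a₂.ne, a₃.ne, a₄.ne, by grind⟩

theorem insert_u₃_compl (hC : FourVertexConfig G u u₁ u₂ u₃ u₄) :
    insert u₃ ({u, u₁, u₂, u₃} : Set V)ᶜ = {u, u₁, u₂}ᶜ := by
  obtain ⟨-, -, n₃, -, -, n₁₃, -, n₂₃, -, -⟩ := hC.ne
  ext x
  by_cases hx : x = u₃ <;> simp [hx, n₃.symm, n₁₃.symm, n₂₃.symm]

theorem insert_u₂_compl (hC : FourVertexConfig G u u₁ u₂ u₃ u₄) :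
    insert u₂ ({u, u₁, u₂} : Set V)ᶜ = {u, u₁}ᶜ := by
  obtain ⟨-, n₂, -, -, n₁₂, -⟩ := hC.ne
  ext x
  by_cases hx : x = u₂ <;> simp [hx, n₂.symm, n₁₂.symm]

theorem insert_u₁_compl (hC : FourVertexConfig G u u₁ u₂ u₃ u₄) :
    insert u₁ ({u, u₁} : Set V)ᶜ = {u}ᶜ := by
  ext x
  by_cases hx : x = u₁ <;> simp [hx, hC.ne.1.symm]

section Finite

variable [Finite V]

theorem ncard_neighborSet₃_inter_le (hC : FourVertexConfig G u u₁ u₂ u₃ u₄) :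
    (G.neighborSet u₃ ∩ ({u, u₁, u₂, u₃} : Set V)ᶜ).ncard ≤ 4 := by
  have := ncard_neighborSet_inter_compl_add_le (G := G) (v := u₃) (A := {u, u₂})
    (S := {u, u₁, u₂, u₃})
    (by simp [pair_subset_iff, hC.adj.2.2.1.symm, hC.adj₂₃.symm]) (by simp [pair_subset_iff])
  rw [ncard_pair hC.ne.2.1] at this
  have := hC.ncard_neighborSet₃
  omega

theorem not_adj₁₃ (hC : FourVertexConfig G u u₁ u₂ u₃ u₄)
    (h : 4 ≤ (G.neighborSet u₃ ∩ ({u, u₁, u₂, u₃} : Set V)ᶜ).ncard) : ¬ G.Adj u₁ u₃ :=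
  fun h₁₃ => by
  obtain ⟨n₁, n₂, -, -, n₁₂, -⟩ := hC.ne
  have := ncard_neighborSet_inter_compl_add_le (G := G) (v := u₃) (A := {u, u₂, u₁})
    (S := {u, u₁, u₂, u₃})
    (by simp [insert_subset_iff, hC.adj.2.2.1.symm, hC.adj₂₃.symm, h₁₃.symm])
    (by simp [insert_subset_iff])
  rw [ncard_eq_three.2 ⟨u, u₂, u₁, n₂, n₁, n₁₂.symm, rfl⟩] at this
  have := hC.ncard_neighborSet₃
  omega

theorem ncard_neighborSet₂_inter_le (hC : FourVertexConfig G u u₁ u₂ u₃ u₄) :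
    (G.neighborSet u₂ ∩ ({u, u₁, u₂} : Set V)ᶜ).ncard ≤ 5 := by
  have := ncard_neighborSet_inter_compl_add_le (G := G) (v := u₂) (A := {u, u₁}) (S := {u, u₁, u₂})
    (by simp [pair_subset_iff, hC.adj.2.1.symm, hC.adj₁₂.symm]) (by simp [pair_subset_iff])
  rw [ncard_pair hC.ne.1] at this
  have := hC.ncard_neighborSet₂
  omega

theorem ncard_neighborSet₁_inter_le (hC : FourVertexConfig G u u₁ u₂ u₃ u₄) :
    (G.neighborSet u₁ ∩ ({u, u₁} : Set V)ᶜ).ncard ≤ 5 := by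
  have := ncard_neighborSet_inter_compl_add_le (G := G) (v := u₁) (A := {u}) (S := {u, u₁})
    (by simp [hC.adj.1.symm]) (by simp)
  rw [ncard_singleton] at this
  have := hC.ncard_neighborSet₁
  omega

theorem ncard_neighborSet_inter_le (hC : FourVertexConfig G u u₁ u₂ u₃ u₄) :
    (G.neighborSet u ∩ ({u} : Set V)ᶜ).ncard ≤ 4 := by
  classical
  refine (ncard_le_ncard inter_subset_left).trans ?_
  rw [hC.neighborSet_eq]
  simpa [← ncard_coe_finset] using Finset.card_le_four (a := u₁) (b := u₂) (c := u₃) (d := u₄)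

theorem completable₁ [DecidableEq V] (hC : FourVertexConfig G u u₁ u₂ u₃ u₄)
    (hL : (L u).card = 3) : Completable G L {u, u₁, u₂, u₃} f {u}ᶜ :=
  completable_univ.of_insert (by rw [insert_eq, union_compl_self]) (by simp) (by simp)
    (by have := hC.ncard_neighborSet_inter_le; omega)

theorem completable₃ [DecidableEq V] (hC : FourVertexConfig G u u₁ u₂ u₃ u₄)
    (hL : ∀ x, (L x).card = 3) : Completable G L {u, u₁, u₂, u₃} f {u, u₁, u₂}ᶜ :=
  ((hC.completable₁ (hL u)).of_insert hC.insert_u₁_compl (by simp) (by simp)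
    (by have := hC.ncard_neighborSet₁_inter_le; have := hL u₁; omega)).of_insert
    hC.insert_u₂_compl (by simp) (by simp)
    (by have := hC.ncard_neighborSet₂_inter_le; have := hL u₂; omega)

theorem colors_of_forced {L : Finset α} {c : α} (hC : FourVertexConfig G u u₁ u₂ u₃ u₄)
    (hL : L.card = 3) (hc : c ∈ L)
    (hforced : ∀ e ∈ L, e ≠ c → 2 ≤ (nbrsOfColor G {u}ᶜ g u e).ncard) (h₃₄ : g u₃ ≠ g u₄) :
    (g u₂ = g u₄ ∧ g u₁ = g u₃ ∧ g u₁ ∈ L ∧ g u₁ ≠ c) ∨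
      (g u₂ ≠ g u₄ ∧ g u₁ = g u₄ ∧ g u₂ = g u₃ ∧ g u₂ ≠ c) := by
  classical
  obtain ⟨-, -, -, -, n₁₂, -, n₁₄, -, n₂₄, -⟩ := hC.ne
  obtain ⟨a₁, a₂, a₃, a₄⟩ := hC.adj
  have hdeg := hC.ncard_neighborSet_inter_le
  have hin : ∀ w, G.Adj u w → w ∈ nbrsOfColor G {u}ᶜ g u (g w) := fun w hw =>
    ⟨by simpa using hw.ne', hw, rfl⟩
  have hmem : ∀ w, G.Adj u w → g w ∈ L.erase c := fun w hw => by
    obtain ⟨h, h'⟩ := mem_and_ne_of_forced hdeg hL hc hforced (hin w hw).1 hw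
    exact Finset.mem_erase.2 ⟨h', h⟩
  have hcard : (L.erase c).card ≤ 2 := by rw [Finset.card_erase_of_mem hc, hL]
  by_cases h₂₄ : g u₂ = g u₄
  · have h₁₄ : g u₁ ≠ g u₄ := fun h₁₄ => by
      have := ncard_nbrsOfColor_le_two_of_forced hdeg hL hc hforced (g u₄)
      have := (two_lt_ncard_iff (toFinite _)).2
        ⟨u₁, u₂, u₄, h₁₄ ▸ hin u₁ a₁, h₂₄ ▸ hin u₂ a₂, hin u₄ a₄, n₁₂, n₁₄, n₂₄⟩
      omega
    exact .inl ⟨h₂₄, Finset.eq_of_ne_of_ne_of_card_le_two hcard (hmem u₁ a₁) (hmem u₃ a₃)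
      (hmem u₄ a₄) h₁₄ h₃₄, Finset.mem_of_mem_erase (hmem u₁ a₁),
      Finset.ne_of_mem_erase (hmem u₁ a₁)⟩
  · have h₁₄ : g u₁ = g u₄ := by
      by_contra h₁₄
      have hsub : nbrsOfColor G {u}ᶜ g u (g u₄) ⊆ {u₄} := by
        rintro w ⟨-, hw, hwc⟩
        rcases hC.eq_of_adj hw with rfl | rfl | rfl | rfl
        exacts [absurd hwc h₁₄, absurd hwc h₂₄, absurd hwc h₃₄, rfl]
      have := ncard_le_ncard hsub
      have := hforced (g u₄) (Finset.mem_of_mem_erase (hmem u₄ a₄))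
        (Finset.ne_of_mem_erase (hmem u₄ a₄))
      rw [ncard_singleton] at *
      omega
    exact .inr ⟨h₂₄, h₁₄, Finset.eq_of_ne_of_ne_of_card_le_two hcard (hmem u₂ a₂) (hmem u₃ a₃)
      (hmem u₄ a₄) h₂₄ h₃₄, Finset.ne_of_mem_erase (hmem u₂ a₂)⟩

theorem mem_and_subsingleton_of_forced₁ (hC : FourVertexConfig G u u₁ u₂ u₃ u₄)
    (hL₁ : (L u₁).card = 3) (hc₁ : g u₁ ∈ L u₁) (h₁₄ : g u₁ = g u₄) (hm₁ : g u₂ ≠ g u₁)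
    (hmc : g u₂ ≠ g u)
    (hforced₁ : ∀ e ∈ L u₁, e ≠ g u₁ → 2 ≤ (nbrsOfColor G {u, u₁}ᶜ g u₁ e).ncard) :
    g u₂ ∈ L u₁ ∧ {w | w ≠ u₂ ∧ G.Adj u₁ w ∧ g w = g u₂}.Subsingleton := by
  obtain ⟨-, -, -, n₄, -, -, n₁₄, -⟩ := hC.ne
  have hmem : ∀ x, G.Adj u₁ x → g x = g u₂ → x ∈ nbrsOfColor G {u, u₁}ᶜ g u₁ (g u₂) :=
    fun x hx hxm => ⟨by simpa using ⟨fun h => hmc (h ▸ hxm).symm, hx.ne'⟩, hx, hxm⟩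
  have hu₄ : u₄ ∈ nbrsOfColor G {u, u₁}ᶜ g u₁ (g u₁) :=
    ⟨by simp [n₄.symm, n₁₄.symm], hC.adj₄₁.symm, h₁₄.symm⟩
  have hc := (ncard_pos (toFinite _)).2 ⟨_, hu₄⟩
  have hm := (ncard_pos (toFinite _)).2 ⟨_, hmem u₂ hC.adj₁₂ rfl⟩
  have hdeg := hC.ncard_neighborSet₁_inter_le
  -- two colors of `L u₁` occur twice around `u₁` and `g u₁` once, leaving room for no other
  have hmL : g u₂ ∈ L u₁ := by_contra fun hmL => by
    have := ncard_nbrsOfColor_add_add_four_le hL₁ hc₁ hforced₁ hmL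
    omega
  have := ncard_nbrsOfColor_add_add_two_le hL₁ hc₁ hforced₁ hmL hm₁
  refine ⟨hmL, ?_⟩
  rintro w ⟨hw₂, h₁w, hwm⟩ w' ⟨hw'₂, h₁w', hw'm⟩
  by_contra hne
  have := (two_lt_ncard_iff (toFinite _)).2 ⟨w, w', u₂, hmem w h₁w hwm, hmem w' h₁w' hw'm,
    hmem u₂ hC.adj₁₂ rfl, hne, hw₂, hw'₂⟩
  omega

end Finite

theorem exists_recolor_u [DecidableEq V] (hC : FourVertexConfig G u u₁ u₂ u₃ u₄)
    (hg : IsArbExtension G L {u, u₁, u₂, u₃} f g)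
    (h₃ : ∀ w ∈ ({u, u₁, u₂, u₃} : Set V)ᶜ, G.Adj u₃ w → g w ≠ g u₃) (hn₁₃ : ¬ G.Adj u₁ u₃)
    (h₂₄ : g u₂ = g u₄) (h₃₄ : g u₃ ≠ g u₄) (hmL : g u₃ ∈ L u) (hmc : g u₃ ≠ g u) :
    ∃ g', IsArbExtension G L {u, u₁, u₂, u₃} f g' ∧ g ≠ g' := by
  obtain ⟨-, -, n₃, -⟩ := hC.ne
  refine ⟨update g u (g u₃), ⟨fun x => ?_, ?_, fun x hx => ?_⟩, fun h => ?_⟩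
  · by_cases hx : x = u
    · subst hx
      simpa using hmL
    · rw [update_of_ne hx]
      exact hg.1 x
  · refine arbColOn_update_of_pendant hg.2.1 (x := u₁) n₃ (fun w hw₃ huw hwm => ?_) rfl
      fun w hwu h₃w => ?_
    · rcases hC.eq_of_adj huw with rfl | rfl | rfl | rfl
      exacts [rfl, absurd (h₂₄ ▸ hwm) h₃₄.symm, absurd rfl hw₃, absurd hwm h₃₄.symm]
    · by_cases hw : w ∈ ({u, u₁, u₂, u₃} : Set V)ᶜ
      · exact h₃ w hw h₃w
      simp only [mem_compl_iff, mem_insert_iff, mem_singleton_iff, not_not] at hw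
      rcases hw with rfl | rfl | rfl | rfl
      exacts [absurd rfl hwu, absurd h₃w.symm hn₁₃, h₂₄ ▸ h₃₄.symm, absurd h₃w G.irrefl]
  · rw [update_of_ne (by rintro rfl; simp at hx)]
    exact hg.2.2 x hx
  · exact hmc (by simpa using (congrFun h u).symm)

theorem exists_recolor_u₁ [Finite V] [DecidableEq V] (hC : FourVertexConfig G u u₁ u₂ u₃ u₄)
    (hL₁ : (L u₁).card = 3) (hg : IsArbExtension G L {u, u₁, u₂, u₃} f g)
    (h₃ : ∀ w ∈ ({u, u₁, u₂, u₃} : Set V)ᶜ, G.Adj u₃ w → g w ≠ g u₃) (hn₁₃ : ¬ G.Adj u₁ u₃)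
    (h₃₄ : g u₃ ≠ g u₄) (h₁₄ : g u₁ = g u₄) (h₂₃ : g u₂ = g u₃) (hmc : g u₂ ≠ g u)
    (hsafe₂ : (nbrsOfColor G {u, u₁, u₂}ᶜ g u₂ (g u₂)).ncard ≤ 1)
    (hforced₁ : ∀ e ∈ L u₁, e ≠ g u₁ → 2 ≤ (nbrsOfColor G {u, u₁}ᶜ g u₁ e).ncard) :
    ∃ g', IsArbExtension G L {u, u₁, u₂, u₃} f g' ∧ g ≠ g' := by
  obtain ⟨-, -, n₃, -, n₁₂, n₁₃, -, n₂₃, -⟩ := hC.ne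
  have hm₁ : g u₂ ≠ g u₁ := h₁₄ ▸ h₂₃ ▸ h₃₄
  obtain ⟨hmL, hv⟩ := hC.mem_and_subsingleton_of_forced₁ hL₁ (hg.1 u₁) h₁₄ hm₁ hmc hforced₁
  have hy : ∀ w, w ≠ u₁ → w ≠ u₃ → G.Adj u₂ w → g w ≠ g u₂ := fun w hw₁ hw₃ h₂w hwm => by
    have hw : w ∈ nbrsOfColor G {u, u₁, u₂}ᶜ g u₂ (g u₂) :=
      ⟨by simpa using ⟨fun h => hmc (h ▸ hwm).symm, hw₁, h₂w.ne'⟩, h₂w, hwm⟩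
    have hu₃ : u₃ ∈ nbrsOfColor G {u, u₁, u₂}ᶜ g u₂ (g u₂) :=
      ⟨by simp [n₃.symm, n₁₃.symm, n₂₃.symm], hC.adj₂₃, h₂₃.symm⟩
    exact hw₃ ((ncard_le_one_iff (toFinite _)).1 hsafe₂ hw hu₃)
  have hz : ∀ w, w ≠ u₂ → G.Adj u₃ w → w ≠ u₁ ∧ g w ≠ g u₂ := fun w hw₂ h₃w => by
    refine ⟨by rintro rfl; exact hn₁₃ h₃w.symm, ?_⟩
    by_cases hw : w ∈ ({u, u₁, u₂, u₃} : Set V)ᶜ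
    · exact h₂₃ ▸ h₃ w hw h₃w
    simp only [mem_compl_iff, mem_insert_iff, mem_singleton_iff, not_not] at hw
    rcases hw with rfl | rfl | rfl | rfl
    exacts [hmc.symm, absurd h₃w.symm hn₁₃, absurd rfl hw₂, absurd h₃w G.irrefl]
  refine ⟨update g u₁ (g u₂), ⟨fun x => ?_,
    arbColOn_update_of_pendant_path hg.2.1 n₁₂ n₁₃ n₂₃ hv rfl hy h₂₃.symm hz,
    fun x hx => ?_⟩, fun h => hm₁ ?_⟩
  · by_cases hx : x = u₁
    · subst hx
      simpa using hmL
    · rw [update_of_ne hx]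
      exact hg.1 x
  · rw [update_of_ne (by rintro rfl; simp at hx)]
    exact hg.2.2 x hx
  · simpa using (congrFun h u₁).symm

theorem exists_two_of_forced [Finite V] [DecidableEq V] (hC : FourVertexConfig G u u₁ u₂ u₃ u₄)
    (hL : ∀ x, (L x).card = 3) (hg : IsArbExtension G L {u, u₁, u₂, u₃} f g)
    (h₃ : ∀ w ∈ ({u, u₁, u₂, u₃} : Set V)ᶜ, G.Adj u₃ w → g w ≠ g u₃) (hn₁₃ : ¬ G.Adj u₁ u₃)
    (hsafe₂ : (nbrsOfColor G {u, u₁, u₂}ᶜ g u₂ (g u₂)).ncard ≤ 1)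
    (hforced₁ : ∀ e ∈ L u₁, e ≠ g u₁ → 2 ≤ (nbrsOfColor G {u, u₁}ᶜ g u₁ e).ncard)
    (hforced : ∀ e ∈ L u, e ≠ g u → 2 ≤ (nbrsOfColor G {u}ᶜ g u e).ncard) :
    HasTwoArbExtensions G L {u, u₁, u₂, u₃} f := by
  obtain ⟨-, -, -, n₄, -, -, n₁₄, -, n₂₄, n₃₄⟩ := hC.ne
  have h₃₄ : g u₃ ≠ g u₄ := (h₃ u₄ (by simp [n₄.symm, n₁₄.symm, n₂₄.symm, n₃₄.symm]) hC.adj₃₄).symm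
  rcases hC.colors_of_forced (hL u) (hg.1 u) hforced h₃₄ with
    ⟨h₂₄, h₁₃, hmL, hmc⟩ | ⟨-, h₁₄, h₂₃, hmc⟩
  · obtain ⟨g', hg', hne⟩ := hC.exists_recolor_u hg h₃ hn₁₃ h₂₄ h₃₄ (h₁₃ ▸ hmL) (h₁₃ ▸ hmc)
    exact ⟨g, g', hg, hg', hne⟩
  · obtain ⟨g', hg', hne⟩ :=
      hC.exists_recolor_u₁ (hL u₁) hg h₃ hn₁₃ h₃₄ h₁₄ h₂₃ hmc hsafe₂ hforced₁
    exact ⟨g, g', hg, hg', hne⟩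

theorem exists_two_of_colored₂ [Finite V] [DecidableEq V] (hC : FourVertexConfig G u u₁ u₂ u₃ u₄)
    (hL : ∀ x, (L x).card = 3) (hg : IsArbLColoringOn G L {u, u₁}ᶜ g)
    (hgf : EqOn g f {u, u₁, u₂, u₃}ᶜ)
    (h₃ : ∀ w ∈ ({u, u₁, u₂, u₃} : Set V)ᶜ, G.Adj u₃ w → g w ≠ g u₃) (hn₁₃ : ¬ G.Adj u₁ u₃)
    (hsafe₂ : (nbrsOfColor G {u, u₁, u₂}ᶜ g u₂ (g u₂)).ncard ≤ 1) :
    HasTwoArbExtensions G L {u, u₁, u₂, u₃} f := by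
  obtain ⟨n₁, n₂, n₃, -, n₁₂, n₁₃, -⟩ := hC.ne
  have hupdate : ∀ {g' : V → α} {v c}, v ∈ ({u, u₁, u₂, u₃} : Set V) → EqOn g' f {u, u₁, u₂, u₃}ᶜ →
      EqOn (update g' v c) f {u, u₁, u₂, u₃}ᶜ :=
    fun hv h => (eqOn_update_of_notMem (not_not.2 hv)).trans h
  rcases exists_two_safe_or_forced (G := G) (s := {u, u₁}ᶜ) (v := u₁) (g := g) (L := L u₁)
      (by have := hC.ncard_neighborSet₁_inter_le; have := hL u₁; omega) with
    ⟨d, hd, d', hd', hne, hs, hs'⟩ | ⟨c₁, hc₁, hsafe₁, hforced₁⟩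
  · exact (hC.completable₁ (hL u)).exists_two hC.insert_u₁_compl hg hgf (by simp) (by simp)
      hd hd' hne hs hs'
  have hg₁ := hC.insert_u₁_compl ▸ hg.update_insert (by simp) hc₁ hsafe₁
  have hg₁f : EqOn (update g u₁ c₁) f _ := hupdate (by simp) hgf
  rcases exists_two_safe_or_forced (G := G) (s := {u}ᶜ) (v := u) (g := update g u₁ c₁)
      (L := L u)
      (by have := hC.ncard_neighborSet_inter_le; have := hL u; omega) with
    ⟨d, hd, d', hd', hne, hs, hs'⟩ | ⟨c, hc, hsafe, hforced⟩
  · exact completable_univ.exists_two (by rw [insert_eq, union_compl_self]) hg₁ hg₁f (by simp)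
      (by simp) hd hd' hne hs hs'
  set g₀ := update (update g u₁ c₁) u c
  have hg₀ : IsArbLColoringOn G L univ g₀ := by
    simpa only [insert_eq, union_compl_self] using hg₁.update_insert (by simp) hc hsafe
  have hg₀₁ : EqOn g₀ (update g u₁ c₁) {u}ᶜ := eqOn_update_of_notMem (by simp)
  have hg₀g : EqOn g₀ g {u, u₁}ᶜ :=
    (hg₀₁.mono (by simp)).trans (eqOn_update_of_notMem (by simp))
  have hg₀₃ : g₀ u₃ = g u₃ := hg₀g (by simp [n₃.symm, n₁₃.symm])
  have hg₀₂ : g₀ u₂ = g u₂ := hg₀g (by simp [n₂.symm, n₁₂.symm])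
  refine hC.exists_two_of_forced hL
    ⟨fun x => hg₀.1 x trivial, hg₀.2, fun x hx => (hupdate (by simp) hg₁f) hx⟩
    (fun w hw h₃w => ?_) hn₁₃ ?_ (fun e he hec => ?_) (fun e he hec => ?_)
  · rw [hg₀₃, hg₀g (compl_subset_compl.2 (by simp [insert_subset_iff]) hw)]
    exact h₃ w hw h₃w
  · rwa [hg₀₂, nbrsOfColor_congr (hg₀g.mono (compl_subset_compl.2 (by simp [insert_subset_iff])))]
  · rw [nbrsOfColor_congr hg₀g]
    exact hforced₁ e he (by simpa [g₀, n₁.symm] using hec)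
  · rw [nbrsOfColor_congr hg₀₁]
    exact hforced e he (by simpa [g₀] using hec)

theorem exists_two_of_forced₃ [Finite V] [DecidableEq V] (hC : FourVertexConfig G u u₁ u₂ u₃ u₄)
    (hL : ∀ x, (L x).card = 3) (hf : IsArbLColoringOn G L {u, u₁, u₂, u₃}ᶜ f) {c₃ : α}
    (hc₃ : c₃ ∈ L u₃)
    (hforced₃ : ∀ e ∈ L u₃, e ≠ c₃ → 2 ≤ (nbrsOfColor G {u, u₁, u₂, u₃}ᶜ f u₃ e).ncard) :
    HasTwoArbExtensions G L {u, u₁, u₂, u₃} f := by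
  obtain ⟨-, -, -, -, -, -, -, n₂₃, -⟩ := hC.ne
  have h₄ := ncard_nbrsOfColor_add_four_le (hL u₃) hc₃ hforced₃
  have hdeg := hC.ncard_neighborSet₃_inter_le
  have hg₃ := hC.insert_u₃_compl ▸ hf.update_insert (by simp) hc₃ (by omega)
  obtain ⟨c₂, hc₂, hsafe₂⟩ := exists_ncard_nbrsOfColor_le_one (G := G) (s := {u, u₁, u₂}ᶜ) (v := u₂)
    (g := update f u₃ c₃)
    (L := L u₂) (by have := hC.ncard_neighborSet₂_inter_le; have := hL u₂; omega)
  have hg₂₃ : EqOn (update (update f u₃ c₃) u₂ c₂) (update f u₃ c₃)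
      {u, u₁, u₂}ᶜ := eqOn_update_of_notMem (by simp)
  have hg₂f : EqOn (update (update f u₃ c₃) u₂ c₂) f {u, u₁, u₂, u₃}ᶜ :=
    fun x hx => by simp_all
  refine hC.exists_two_of_colored₂ hL (hC.insert_u₂_compl ▸ hg₃.update_insert (by simp) hc₂ hsafe₂)
    hg₂f (fun w hw h₃w hwc => ?_) (hC.not_adj₁₃ (by omega)) ?_
  · rw [hg₂f hw, update_of_ne n₂₃.symm, update_self] at hwc
    have := (ncard_pos (s := nbrsOfColor G {u, u₁, u₂, u₃}ᶜ f u₃ c₃) (toFinite _)).2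
      ⟨w, hw, h₃w, hwc⟩
    omega
  · rw [update_self]
    rwa [← nbrsOfColor_congr hg₂₃] at hsafe₂

end FourVertexConfig

end Arboreal

theorem stmt_7 {V α : Type*} [Fintype V] (G : SimpleGraph V)
    (L : V → Finset α) (hL : ∀ x, (L x).card = 3)
    (u u₁ u₂ u₃ u₄ : V)
    (hdist : [u₁, u₂, u₃, u₄].Pairwise (· ≠ ·))
    (hnbr : G.neighborSet u = {u₁, u₂, u₃, u₄})
    (h12 : G.Adj u₁ u₂) (h23 : G.Adj u₂ u₃) (h34 : G.Adj u₃ u₄) (h41 : G.Adj u₄ u₁)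
    (hd1 : (G.neighborSet u₁).ncard ≤ 6) (hd2 : (G.neighborSet u₂).ncard ≤ 7)
    (hd3 : (G.neighborSet u₃).ncard ≤ 6)
    (f : V → α)
    (hfL : ∀ x, x ∉ ({u, u₁, u₂, u₃} : Set V) → f x ∈ L x)
    (hf : ArbColOn G ({u, u₁, u₂, u₃} : Set V)ᶜ f) :
    ∃ g₁ g₂ : V → α,
      ((∀ x, g₁ x ∈ L x) ∧ ArbColOn G Set.univ g₁ ∧
        ∀ x, x ∉ ({u, u₁, u₂, u₃} : Set V) → g₁ x = f x) ∧
      ((∀ x, g₂ x ∈ L x) ∧ ArbColOn G Set.univ g₂ ∧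
        ∀ x, x ∉ ({u, u₁, u₂, u₃} : Set V) → g₂ x = f x) ∧
      g₁ ≠ g₂ := by
  classical
  have hC : FourVertexConfig G u u₁ u₂ u₃ u₄ := ⟨hdist, hnbr, h12, h23, h34, h41, hd1, hd2, hd3⟩
  have hf₀ : IsArbLColoringOn G L ({u, u₁, u₂, u₃} : Set V)ᶜ f := ⟨hfL, hf⟩
  rcases exists_two_safe_or_forced (G := G) (s := ({u, u₁, u₂, u₃} : Set V)ᶜ) (v := u₃) (g := f)
      (L := L u₃) (by have := hC.ncard_neighborSet₃_inter_le; have := hL u₃; omega) with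
    ⟨c, hc, c', hc', hne, hsafe, hsafe'⟩ | ⟨c₃, hc₃, -, hforced₃⟩
  · exact (hC.completable₃ hL).exists_two hC.insert_u₃_compl hf₀ (fun _ _ => rfl) (by simp)
      (by simp) hc hc' hne hsafe hsafe'
  · exact hC.exists_two_of_forced₃ hL hf₀ hc₃ hforced₃
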